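/- If some optimal pair exists, then there exists an optimal pair (A*, U*) that is constant on level sets of the regularized virtual cost: for all indices j, k with φ_j = φ_k, one has U*_j = U*_k and A*_j = A*_k. -/

import Mathlib

/-!
Averaging an optimal pair over each level set of `φ` gives another optimal pair. On a level set,
`U` is replaced by its mean `Ū` and `A` by the value `Ā` with `(1 - Ū) * Ā` equal to the mean of
`x = (1 - U) * A`. The level sets of the non-decreasing `φ` are consecutive intervals `[a, b]` on
which `φ` is the mean of `ψ` while every prefix mean `Avg(a, m)` is at least `φ`; as `x` is
non-increasing, Abel summation gives `φ * Σ x ≤ Σ x * ψ` on each block, so the budget does not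
grow, and the pooled `x` stays non-increasing because the blocks are ordered. `Σ U` is unchanged,
and Cauchy–Schwarz, `(Σ (1 - U))² ≤ Σ (1 - U) * A * Σ (1 - U) / A`, shows that `Σ (1 - U) / A`
does not grow.
-/

/-- Virtual cost of the uniform distribution over `{c 1, …, c n}`:
`ψ j = j·c j − (j−1)·c (j−1)`. -/
noncomputable def vc (c : ℕ → ℝ) (j : ℕ) : ℝ :=
  (j : ℝ) * c j - ((j : ℝ) - 1) * c (j - 1)

/-- `Avg(l,k) = (1/(k−l+1))·Σ_{t=l}^{k} ψ_t`. -/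
noncomputable def avg (c : ℕ → ℝ) (l k : ℕ) : ℝ :=
  (∑ t ∈ Finset.Icc l k, vc c t) / ((k : ℝ) - (l : ℝ) + 1)

/-- `ψ'_l = min_{l ≤ k ≤ n} Avg(l,k)`. -/
noncomputable def rvcAux (n : ℕ) (c : ℕ → ℝ) (l : ℕ) : ℝ :=
  sInf {x | ∃ k, l ≤ k ∧ k ≤ n ∧ x = avg c l k}

/-- Regularized virtual cost: `φ_j = max_{1 ≤ l ≤ j} ψ'_l`. -/
noncomputable def rvc (n : ℕ) (c : ℕ → ℝ) (j : ℕ) : ℝ :=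
  sSup {x | ∃ l, 1 ≤ l ∧ l ≤ j ∧ x = rvcAux n c l}

/-- A pair `(A, U)` is feasible: `0 < A_j ≤ 1`, `0 ≤ U_j ≤ 1`, the sequence
`(1−U_j)·A_j` is non-increasing, and the expected spending is within `B`. -/
def FeasPair (n : ℕ) (c : ℕ → ℝ) (B : ℝ) (A U : ℕ → ℝ) : Prop :=
  (∀ j, 1 ≤ j → j ≤ n → 0 < A j ∧ A j ≤ 1 ∧ 0 ≤ U j ∧ U j ≤ 1) ∧
    (∀ j, 1 ≤ j → j < n → (1 - U (j + 1)) * A (j + 1) ≤ (1 - U j) * A j) ∧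
    ∑ j ∈ Finset.Icc 1 n, (1 - U j) * A j * vc c j ≤ B

/-- The objective
`V(A,U) = β²·(1/n)·Σ (1−U_j)/A_j + ((1/n)·Σ U_j)²`. -/
noncomputable def objV (n : ℕ) (c : ℕ → ℝ) (β : ℝ) (A U : ℕ → ℝ) : ℝ :=
  β ^ 2 * (1 / (n : ℝ)) * (∑ j ∈ Finset.Icc 1 n, (1 - U j) / A j) +
    ((1 / (n : ℝ)) * ∑ j ∈ Finset.Icc 1 n, U j) ^ 2

/-- A feasible pair is optimal if it minimizes the objective over all
feasible pairs. -/
def OptimalPair (n : ℕ) (c : ℕ → ℝ) (B β : ℝ) (A U : ℕ → ℝ) : Prop :=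
  FeasPair n c B A U ∧
    ∀ A' U', FeasPair n c B A' U' → objV n c β A U ≤ objV n c β A' U'

open Finset
open scoped BigOperators

theorem Finset.sum_expect_fiber {ι κ K : Type*} [DecidableEq κ] [Semifield K] [CharZero K]
    (s : Finset ι) (g : ι → κ) (f : ι → K) :
    ∑ j ∈ s, 𝔼 i ∈ s with g i = g j, f i = ∑ j ∈ s, f j := by
  have hmaps : ∀ i ∈ s, g i ∈ s.image g := fun i hi => mem_image_of_mem g hi
  rw [← sum_fiberwise_of_maps_to' hmaps (fun y => 𝔼 i ∈ s with g i = y, f i),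
    ← sum_fiberwise_of_maps_to hmaps f]
  refine sum_congr rfl fun y _ => ?_
  rw [sum_const, nsmul_eq_mul, card_mul_expect]

theorem Finset.sq_expect_le_expect_mul_expect_of_sq_le_mul {ι : Type*} (s : Finset ι)
    {r f g : ι → ℝ} (hf : ∀ i ∈ s, 0 ≤ f i) (hg : ∀ i ∈ s, 0 ≤ g i)
    (hr : ∀ i ∈ s, r i ^ 2 ≤ f i * g i) :
    (𝔼 i ∈ s, r i) ^ 2 ≤ (𝔼 i ∈ s, f i) * 𝔼 i ∈ s, g i := by
  simp only [expect_eq_sum_div_card]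
  rw [div_pow, div_mul_div_comm, ← sq]
  exact div_le_div_of_nonneg_right (sum_sq_le_sum_mul_sum_of_sq_le_mul s hf hg hr) (by positivity)

theorem Finset.sum_Icc_add_sum_Icc {M : Type*} [AddCommMonoid M] (f : ℕ → M) {a m k : ℕ}
    (ham : a ≤ m + 1) (hmk : m ≤ k) :
    ∑ t ∈ Icc a m, f t + ∑ t ∈ Icc (m + 1) k, f t = ∑ t ∈ Icc a k, f t := by
  simpa only [Ico_add_one_right_eq_Icc] using
    sum_Ico_consecutive f ham (by omega : m + 1 ≤ k + 1)

theorem sum_Icc_mul_nonneg_of_antitoneOn {x y : ℕ → ℝ} {a b : ℕ}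
    (hx : AntitoneOn x (Set.Icc a b)) (hxb : 0 ≤ x b)
    (hy : ∀ m ∈ Icc a b, 0 ≤ ∑ t ∈ Icc a m, y t) :
    0 ≤ ∑ t ∈ Icc a b, x t * y t := by
  rcases lt_or_ge b a with hba | hab
  · simp [Icc_eq_empty_of_lt hba]
  have key : ∀ m, a ≤ m → m ≤ b →
      x m * ∑ t ∈ Icc a m, y t ≤ ∑ t ∈ Icc a m, x t * y t := by
    intro m ham
    induction m, ham using Nat.le_induction with
    | base => simp
    | succ m ham ih =>
      intro hmb
      have hxm : x (m + 1) ≤ x m := hx ⟨ham, by omega⟩ ⟨by omega, hmb⟩ (by omega)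
      have hym := hy m (mem_Icc.2 ⟨ham, by omega⟩)
      rw [sum_Icc_succ_top (by omega), sum_Icc_succ_top (by omega)]
      nlinarith [ih (by omega), mul_le_mul_of_nonneg_right hxm hym]
  exact (mul_nonneg hxb (hy b (mem_Icc.2 ⟨hab, le_rfl⟩))).trans (key b hab le_rfl)

section Pooling

variable {ι : Type*} {s : Finset ι} {A U : ι → ℝ}

/-- Chosen so that `(1 - 𝔼 U) * pooledA = 𝔼 ((1 - U) * A)`; when `𝔼 U = 1` every `U t = 1` on `s`
and the value `1` merely keeps `0 < A ≤ 1`. -/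
noncomputable def pooledA (s : Finset ι) (A U : ι → ℝ) : ℝ :=
  if 𝔼 t ∈ s, U t = 1 then 1 else (𝔼 t ∈ s, (1 - U t) * A t) / (1 - 𝔼 t ∈ s, U t)

lemma expect_one_sub_mul_le (hs : s.Nonempty)
    (hb : ∀ t ∈ s, 0 < A t ∧ A t ≤ 1 ∧ 0 ≤ U t ∧ U t ≤ 1) :
    𝔼 t ∈ s, (1 - U t) * A t ≤ 1 - 𝔼 t ∈ s, U t := by
  rw [show 1 - 𝔼 t ∈ s, U t = 𝔼 t ∈ s, (1 - U t) by rw [expect_sub_distrib, expect_const hs]]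
  refine expect_le_expect fun t ht => ?_
  obtain ⟨-, hA1, -, hU1⟩ := hb t ht
  nlinarith

lemma expect_one_sub_mul_pos (hs : s.Nonempty)
    (hb : ∀ t ∈ s, 0 < A t ∧ A t ≤ 1 ∧ 0 ≤ U t ∧ U t ≤ 1) (hU : 𝔼 t ∈ s, U t ≠ 1) :
    0 < 𝔼 t ∈ s, (1 - U t) * A t := by
  have hlt : 𝔼 t ∈ s, U t < 1 := (expect_le hs fun t ht => (hb t ht).2.2.2).lt_of_ne hU
  obtain ⟨t₀, ht₀, hUt₀⟩ := exists_lt_of_expect_lt hs hlt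
  refine expect_pos' (fun t ht => mul_nonneg (by linarith [hb t ht]) (hb t ht).1.le) ⟨t₀, ht₀, ?_⟩
  exact mul_pos (by linarith) (hb t₀ ht₀).1

lemma one_sub_expect_mul_pooledA (hs : s.Nonempty)
    (hb : ∀ t ∈ s, 0 < A t ∧ A t ≤ 1 ∧ 0 ≤ U t ∧ U t ≤ 1) :
    (1 - 𝔼 t ∈ s, U t) * pooledA s A U = 𝔼 t ∈ s, (1 - U t) * A t := by
  unfold pooledA
  split_ifs with hU
  · have hnonneg : 0 ≤ 𝔼 t ∈ s, (1 - U t) * A t :=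
      expect_nonneg fun t ht => mul_nonneg (by linarith [hb t ht]) (hb t ht).1.le
    linarith [expect_one_sub_mul_le hs hb]
  · exact mul_div_cancel₀ _ (sub_ne_zero.2 (Ne.symm hU))

lemma pooledA_pos_and_le_one (hs : s.Nonempty)
    (hb : ∀ t ∈ s, 0 < A t ∧ A t ≤ 1 ∧ 0 ≤ U t ∧ U t ≤ 1) :
    0 < pooledA s A U ∧ pooledA s A U ≤ 1 := by
  unfold pooledA
  split_ifs with hU
  · exact ⟨one_pos, le_rfl⟩
  have hpos : 0 < 1 - 𝔼 t ∈ s, U t :=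
    sub_pos.2 ((expect_le hs fun t ht => (hb t ht).2.2.2).lt_of_ne hU)
  exact ⟨div_pos (expect_one_sub_mul_pos hs hb hU) hpos,
    (div_le_one hpos).2 (expect_one_sub_mul_le hs hb)⟩

lemma one_sub_expect_div_pooledA_le (hs : s.Nonempty)
    (hb : ∀ t ∈ s, 0 < A t ∧ A t ≤ 1 ∧ 0 ≤ U t ∧ U t ≤ 1) :
    (1 - 𝔼 t ∈ s, U t) / pooledA s A U ≤ 𝔼 t ∈ s, (1 - U t) / A t := by
  have hw : ∀ t ∈ s, 0 ≤ 1 - U t := fun t ht => by linarith [hb t ht]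
  unfold pooledA
  split_ifs with hU
  · simpa [hU] using expect_nonneg fun t ht => div_nonneg (hw t ht) (hb t ht).1.le
  have hCS := sq_expect_le_expect_mul_expect_of_sq_le_mul s
    (fun t ht => mul_nonneg (hw t ht) (hb t ht).1.le)
    (fun t ht => div_nonneg (hw t ht) (hb t ht).1.le)
    (fun t ht => (show (1 - U t) ^ 2 = (1 - U t) * A t * ((1 - U t) / A t) by
      field_simp [(hb t ht).1.ne']).le)
  rw [expect_sub_distrib, expect_const hs] at hCS
  rw [div_div_eq_mul_div, ← sq, div_le_iff₀ (expect_one_sub_mul_pos hs hb hU)]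
  linarith

end Pooling

section RegularizedVirtualCost

variable {n : ℕ} {c : ℕ → ℝ}

lemma finite_setOf_avg (n : ℕ) (c : ℕ → ℝ) (l : ℕ) :
    {x | ∃ k, l ≤ k ∧ k ≤ n ∧ x = avg c l k}.Finite :=
  ((Set.finite_Icc l n).image (avg c l)).subset fun _ ⟨k, hlk, hkn, hx⟩ => ⟨k, ⟨hlk, hkn⟩, hx.symm⟩

lemma finite_setOf_rvcAux (n : ℕ) (c : ℕ → ℝ) (j : ℕ) :
    {x | ∃ l, 1 ≤ l ∧ l ≤ j ∧ x = rvcAux n c l}.Finite :=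
  ((Set.finite_Icc 1 j).image (rvcAux n c)).subset fun _ ⟨l, hl, hlj, hx⟩ => ⟨l, ⟨hl, hlj⟩, hx.symm⟩

lemma rvcAux_le_avg {l k : ℕ} (hlk : l ≤ k) (hkn : k ≤ n) : rvcAux n c l ≤ avg c l k :=
  csInf_le (finite_setOf_avg n c l).bddBelow ⟨k, hlk, hkn, rfl⟩

lemma exists_rvcAux_eq_avg {l : ℕ} (hln : l ≤ n) :
    ∃ k, l ≤ k ∧ k ≤ n ∧ rvcAux n c l = avg c l k :=
  Set.Nonempty.csInf_mem (s := {x | ∃ k, l ≤ k ∧ k ≤ n ∧ x = avg c l k}) ⟨_, l, le_rfl, hln, rfl⟩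
    (finite_setOf_avg n c l)

lemma rvcAux_le_rvc {l j : ℕ} (hl : 1 ≤ l) (hlj : l ≤ j) : rvcAux n c l ≤ rvc n c j :=
  le_csSup (finite_setOf_rvcAux n c j).bddAbove ⟨l, hl, hlj, rfl⟩

lemma exists_rvc_eq_rvcAux {j : ℕ} (hj : 1 ≤ j) :
    ∃ l, 1 ≤ l ∧ l ≤ j ∧ rvc n c j = rvcAux n c l :=
  Set.Nonempty.csSup_mem (s := {x | ∃ l, 1 ≤ l ∧ l ≤ j ∧ x = rvcAux n c l}) ⟨_, 1, le_rfl, hj, rfl⟩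
    (finite_setOf_rvcAux n c j)

lemma rvc_mono {j k : ℕ} (hj : 1 ≤ j) (hjk : j ≤ k) : rvc n c j ≤ rvc n c k := by
  obtain ⟨l, hl, hlj, he⟩ := exists_rvc_eq_rvcAux (n := n) (c := c) hj
  exact he ▸ rvcAux_le_rvc hl (hlj.trans hjk)

lemma avg_le_iff {l k : ℕ} (hlk : l ≤ k) {v : ℝ} :
    avg c l k ≤ v ↔ ∑ t ∈ Icc l k, vc c t ≤ (k - l + 1) * v := by
  have hd : (0 : ℝ) < k - l + 1 := by linarith [(Nat.cast_le (α := ℝ)).2 hlk]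
  rw [avg, div_le_iff₀ hd, mul_comm]

lemma le_avg_iff {l k : ℕ} (hlk : l ≤ k) {v : ℝ} :
    v ≤ avg c l k ↔ (k - l + 1) * v ≤ ∑ t ∈ Icc l k, vc c t := by
  have hd : (0 : ℝ) < k - l + 1 := by linarith [(Nat.cast_le (α := ℝ)).2 hlk]
  rw [avg, le_div_iff₀ hd, mul_comm]

lemma le_sum_of_le_rvcAux {l m : ℕ} {v : ℝ} (hv : v ≤ rvcAux n c l) (hlm : l ≤ m) (hmn : m ≤ n) :
    (m - l + 1) * v ≤ ∑ t ∈ Icc l m, vc c t :=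
  (le_avg_iff hlm).1 (hv.trans (rvcAux_le_avg hlm hmn))

lemma rvcAux_eq_rvc_of_forall_lt_ne {a : ℕ} (ha : 1 ≤ a)
    (h : ∀ l, 1 ≤ l → l < a → rvc n c l ≠ rvc n c a) : rvcAux n c a = rvc n c a := by
  obtain ⟨l, hl, hla, he⟩ := exists_rvc_eq_rvcAux (n := n) (c := c) ha
  rcases hla.lt_or_eq with hla | rfl
  · exact absurd (le_antisymm (rvc_mono hl hla.le) (he ▸ rvcAux_le_rvc hl le_rfl)) (h l hl hla)
  · exact he.symm

lemma exists_gt_sum_le {a k : ℕ} {v : ℝ} (hak : a ≤ k) (hkn : k < n)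
    (hφ : rvc n c (k + 1) ≤ v) (hS : ∑ t ∈ Icc a k, vc c t ≤ (k - a + 1) * v) :
    ∃ k', k < k' ∧ k' ≤ n ∧ ∑ t ∈ Icc a k', vc c t ≤ (k' - a + 1) * v := by
  obtain ⟨k', hkk', hk'n, he⟩ := exists_rvcAux_eq_avg (n := n) (c := c) hkn
  have hS' := (avg_le_iff hkk').1 (he ▸ (rvcAux_le_rvc (by omega) le_rfl).trans hφ)
  refine ⟨k', by omega, hk'n, ?_⟩
  rw [← sum_Icc_add_sum_Icc _ (by omega) (by omega : k ≤ k')]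
  push_cast at hS'
  linarith

lemma rvc_le_of_sum_le {a k : ℕ} {v : ℝ} (ha : 1 ≤ a) (hak : a ≤ k) (hkn : k ≤ n)
    (hφ : rvc n c a ≤ v) (hv : v ≤ rvcAux n c a)
    (hS : ∑ t ∈ Icc a k, vc c t ≤ (k - a + 1) * v) : rvc n c k ≤ v := by
  obtain ⟨l, hl, hlk, he⟩ := exists_rvc_eq_rvcAux (n := n) (c := c) (ha.trans hak)
  rw [he]
  rcases le_or_gt l a with hla | hal
  · exact (rvcAux_le_rvc hl hla).trans hφ
  obtain ⟨m, rfl⟩ : ∃ m, l = m + 1 := ⟨l - 1, by omega⟩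
  have hlow := le_sum_of_le_rvcAux hv (by omega : a ≤ m) (by omega)
  rw [← sum_Icc_add_sum_Icc _ (by omega) (by omega : m ≤ k)] at hS
  refine (rvcAux_le_avg hlk hkn).trans ((avg_le_iff hlk).2 ?_)
  push_cast
  linarith

end RegularizedVirtualCost

section LevelSets

variable {n : ℕ} {c : ℕ → ℝ}

noncomputable def levelSet (n : ℕ) (c : ℕ → ℝ) (j : ℕ) : Finset ℕ :=
  {m ∈ Icc 1 n | rvc n c m = rvc n c j}

lemma levelSet_congr {j k : ℕ} (h : rvc n c j = rvc n c k) : levelSet n c j = levelSet n c k := by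
  rw [levelSet, levelSet, h]

lemma mem_levelSet_self {j : ℕ} (hj : j ∈ Icc 1 n) : j ∈ levelSet n c j :=
  mem_filter.2 ⟨hj, rfl⟩

lemma lt_of_mem_levelSet_of_rvc_lt {j k t t' : ℕ} (ht : t ∈ levelSet n c j)
    (ht' : t' ∈ levelSet n c k) (hjk : rvc n c j < rvc n c k) : t < t' := by
  obtain ⟨-, htj⟩ := mem_filter.1 ht
  obtain ⟨ht'n, ht'k⟩ := mem_filter.1 ht'
  by_contra! h
  have := rvc_mono (n := n) (c := c) (mem_Icc.1 ht'n).1 h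
  rw [htj, ht'k] at this
  linarith

lemma exists_levelSet_eq_Icc {j : ℕ} (hj : j ∈ Icc 1 n) :
    ∃ a b, 1 ≤ a ∧ a ≤ b ∧ b ≤ n ∧ levelSet n c j = Icc a b := by
  have hne : (levelSet n c j).Nonempty := ⟨j, mem_levelSet_self hj⟩
  obtain ⟨ha, haj⟩ := mem_filter.1 ((levelSet n c j).min'_mem hne)
  obtain ⟨hb, hbj⟩ := mem_filter.1 ((levelSet n c j).max'_mem hne)
  refine ⟨_, _, (mem_Icc.1 ha).1, min'_le _ _ (max'_mem _ hne), (mem_Icc.1 hb).2, ?_⟩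
  ext m
  refine ⟨fun hm => mem_Icc.2 ⟨min'_le _ _ hm, le_max' _ _ hm⟩, fun hm => ?_⟩
  obtain ⟨ham, hmb⟩ := mem_Icc.1 hm
  have hm1 : 1 ≤ m := (mem_Icc.1 ha).1.trans ham
  refine mem_filter.2 ⟨mem_Icc.2 ⟨hm1, hmb.trans (mem_Icc.1 hb).2⟩, le_antisymm ?_ ?_⟩
  · exact hbj ▸ rvc_mono hm1 hmb
  · exact haj ▸ rvc_mono (mem_Icc.1 ha).1 ham

lemma rvcAux_eq_rvc_of_levelSet_eq_Icc {j a b : ℕ} (hab : a ≤ b)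
    (hL : levelSet n c j = Icc a b) : rvcAux n c a = rvc n c j := by
  obtain ⟨ha, haj⟩ := mem_filter.1 (hL ▸ mem_Icc.2 ⟨le_rfl, hab⟩ : a ∈ levelSet n c j)
  rw [← haj]
  refine rvcAux_eq_rvc_of_forall_lt_ne (mem_Icc.1 ha).1 fun l hl hla hφ => ?_
  have : l ∈ levelSet n c j := mem_filter.2 ⟨mem_Icc.2 ⟨hl, by grind⟩, hφ.trans haj⟩
  rw [hL, mem_Icc] at this
  omega

lemma sum_Icc_vc_eq_of_levelSet_eq_Icc {j a b : ℕ} (hab : a ≤ b)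
    (hL : levelSet n c j = Icc a b) : ∑ t ∈ Icc a b, vc c t = (b - a + 1) * rvc n c j := by
  have hmem : ∀ m, m ∈ levelSet n c j ↔ a ≤ m ∧ m ≤ b := fun m => by rw [hL, mem_Icc]
  obtain ⟨ha, haj⟩ := mem_filter.1 ((hmem a).2 ⟨le_rfl, hab⟩)
  obtain ⟨hb, hbj⟩ := mem_filter.1 ((hmem b).2 ⟨hab, le_rfl⟩)
  obtain ⟨ha1, -⟩ := mem_Icc.1 ha
  obtain ⟨-, hbn⟩ := mem_Icc.1 hb
  set v := rvc n c j
  have hv : rvcAux n c a = v := rvcAux_eq_rvc_of_levelSet_eq_Icc hab hL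
  -- `b` is the last `k` at which the mean of `ψ` over `[a, k]` comes down to `φ_j`
  set M := {k ∈ Icc a n | ∑ t ∈ Icc a k, vc c t ≤ (k - a + 1) * v}
  have hM : M.Nonempty := by
    obtain ⟨k, hak, hkn, he⟩ := exists_rvcAux_eq_avg (n := n) (c := c) (hab.trans hbn)
    exact ⟨k, mem_filter.2 ⟨mem_Icc.2 ⟨hak, hkn⟩, (avg_le_iff hak).1 (he ▸ hv.le)⟩⟩
  obtain ⟨hk, hkS⟩ := mem_filter.1 (M.max'_mem hM)
  obtain ⟨hak, hkn⟩ := mem_Icc.1 hk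
  have hkb : M.max' hM ≤ b := by
    have hφk := rvc_le_of_sum_le ha1 hak hkn haj.le hv.ge hkS
    refine ((hmem _).1 (mem_filter.2 ⟨mem_Icc.2 ⟨ha1.trans hak, hkn⟩, ?_⟩)).2
    exact le_antisymm hφk (haj.symm.trans_le (rvc_mono ha1 hak))
  have hbk : b ≤ M.max' hM := by
    by_contra! hkb'
    obtain ⟨k', hkk', hk'n, hS⟩ :=
      exists_gt_sum_le hak (by omega) (hbj ▸ rvc_mono (by omega) hkb') hkS
    exact absurd (M.le_max' k' (mem_filter.2 ⟨mem_Icc.2 ⟨by omega, hk'n⟩, hS⟩)) (by omega)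
  rw [le_antisymm hkb hbk] at hkS
  exact le_antisymm hkS (le_sum_of_le_rvcAux hv.ge hab hbn)

lemma expect_levelSet_vc {j : ℕ} (hj : j ∈ Icc 1 n) :
    𝔼 t ∈ levelSet n c j, vc c t = rvc n c j := by
  obtain ⟨a, b, -, hab, -, hL⟩ := exists_levelSet_eq_Icc hj
  rw [expect_eq_sum_div_card, hL, sum_Icc_vc_eq_of_levelSet_eq_Icc hab hL, Nat.card_Icc,
    Nat.cast_sub (by omega)]
  have : (b : ℝ) + 1 - a ≠ 0 := by linarith [(Nat.cast_le (α := ℝ)).2 hab]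
  push_cast
  field_simp
  ring

end LevelSets

section Ironing

variable {n : ℕ} {c : ℕ → ℝ}

lemma rvc_mul_expect_le_expect_mul_vc {x : ℕ → ℝ} (hx : AntitoneOn x (Set.Icc 1 n))
    (hx0 : ∀ t ∈ Icc 1 n, 0 ≤ x t) {j : ℕ} (hj : j ∈ Icc 1 n) :
    rvc n c j * 𝔼 t ∈ levelSet n c j, x t ≤ 𝔼 t ∈ levelSet n c j, x t * vc c t := by
  obtain ⟨a, b, ha, hab, hbn, hL⟩ := exists_levelSet_eq_Icc hj
  have hv := (rvcAux_eq_rvc_of_levelSet_eq_Icc hab hL).ge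
  rw [mul_expect, ← sub_nonneg, ← expect_sub_distrib, expect_eq_sum_div_card]
  refine div_nonneg ?_ (Nat.cast_nonneg _)
  rw [hL]
  have habel := sum_Icc_mul_nonneg_of_antitoneOn (y := fun t => vc c t - rvc n c j)
    (hx.mono (Set.Icc_subset_Icc ha hbn)) (hx0 b (mem_Icc.2 ⟨ha.trans hab, hbn⟩)) fun m hm => by
      obtain ⟨ham, hmb⟩ := mem_Icc.1 hm
      rw [sum_sub_distrib, sum_const, Nat.card_Icc, nsmul_eq_mul, Nat.cast_sub (by omega)]
      push_cast
      linarith [le_sum_of_le_rvcAux hv ham (hmb.trans hbn)]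
  simpa only [mul_sub, mul_comm] using habel

lemma expect_levelSet_succ_le {f : ℕ → ℝ} (hf : AntitoneOn f (Set.Icc 1 n)) {j : ℕ}
    (hj : 1 ≤ j) (hjn : j < n) :
    𝔼 t ∈ levelSet n c (j + 1), f t ≤ 𝔼 t ∈ levelSet n c j, f t := by
  rcases (rvc_mono (n := n) (c := c) hj j.le_succ).lt_or_eq with hlt | heq
  · have hmem : ∀ {k t}, t ∈ levelSet n c k → t ∈ Set.Icc 1 n := fun ht =>
      mem_Icc.1 (mem_filter.1 ht).1
    have hj_mem := mem_levelSet_self (c := c) (mem_Icc.2 ⟨hj, hjn.le⟩)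
    have hj1_mem := mem_levelSet_self (c := c) (mem_Icc.2 ⟨by omega, hjn⟩)
    calc 𝔼 t ∈ levelSet n c (j + 1), f t ≤ f j :=
          expect_le ⟨_, hj1_mem⟩ fun t ht =>
            hf (hmem hj_mem) (hmem ht) (lt_of_mem_levelSet_of_rvc_lt hj_mem ht hlt).le
      _ ≤ 𝔼 t ∈ levelSet n c j, f t :=
          le_expect ⟨_, hj_mem⟩ fun t ht => hf (hmem ht) (hmem hj_mem)
            (Nat.lt_succ_iff.1 (lt_of_mem_levelSet_of_rvc_lt ht hj1_mem hlt))
  · rw [levelSet_congr heq.symm]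

lemma sum_expect_levelSet_mul_vc_le {x : ℕ → ℝ} (hx : AntitoneOn x (Set.Icc 1 n))
    (hx0 : ∀ t ∈ Icc 1 n, 0 ≤ x t) :
    ∑ j ∈ Icc 1 n, (𝔼 t ∈ levelSet n c j, x t) * vc c j ≤ ∑ j ∈ Icc 1 n, x j * vc c j :=
  calc ∑ j ∈ Icc 1 n, (𝔼 t ∈ levelSet n c j, x t) * vc c j
      = ∑ j ∈ Icc 1 n, 𝔼 i ∈ levelSet n c j, (𝔼 t ∈ levelSet n c i, x t) * vc c i :=
        (sum_expect_fiber _ (rvc n c) _).symm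
    _ = ∑ j ∈ Icc 1 n, (𝔼 t ∈ levelSet n c j, x t) * rvc n c j := by
        refine sum_congr rfl fun j hj => ?_
        rw [← expect_levelSet_vc hj, mul_expect]
        refine expect_congr rfl fun i hi => ?_
        rw [levelSet_congr (mem_filter.1 hi).2]
    _ ≤ ∑ j ∈ Icc 1 n, 𝔼 t ∈ levelSet n c j, x t * vc c t :=
        sum_le_sum fun j hj => (mul_comm _ _).trans_le (rvc_mul_expect_le_expect_mul_vc hx hx0 hj)
    _ = ∑ j ∈ Icc 1 n, x j * vc c j := sum_expect_fiber _ (rvc n c) _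

noncomputable def ironedA (n : ℕ) (c : ℕ → ℝ) (A U : ℕ → ℝ) (j : ℕ) : ℝ :=
  pooledA (levelSet n c j) A U

noncomputable def ironedU (n : ℕ) (c : ℕ → ℝ) (U : ℕ → ℝ) (j : ℕ) : ℝ :=
  𝔼 t ∈ levelSet n c j, U t

variable {B β : ℝ} {A U : ℕ → ℝ}

lemma FeasPair.antitoneOn (h : FeasPair n c B A U) :
    AntitoneOn (fun j => (1 - U j) * A j) (Set.Icc 1 n) :=
  antitoneOn_of_succ_le Set.ordConnected_Icc fun j _ hj hj' => by
    simp only [Order.succ_eq_add_one, Set.mem_Icc] at hj hj'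
    exact h.2.1 j hj.1 (by omega)

lemma FeasPair.bounds_of_mem_levelSet (h : FeasPair n c B A U) {j t : ℕ}
    (ht : t ∈ levelSet n c j) : 0 < A t ∧ A t ≤ 1 ∧ 0 ≤ U t ∧ U t ≤ 1 :=
  h.1 t (mem_Icc.1 (mem_filter.1 ht).1).1 (mem_Icc.1 (mem_filter.1 ht).1).2

lemma FeasPair.one_sub_ironedU_mul_ironedA (h : FeasPair n c B A U) {j : ℕ} (hj : j ∈ Icc 1 n) :
    (1 - ironedU n c U j) * ironedA n c A U j = 𝔼 t ∈ levelSet n c j, (1 - U t) * A t :=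
  one_sub_expect_mul_pooledA ⟨j, mem_levelSet_self hj⟩ fun _ => h.bounds_of_mem_levelSet

theorem FeasPair.ironed (h : FeasPair n c B A U) :
    FeasPair n c B (ironedA n c A U) (ironedU n c U) := by
  have hx0 : ∀ t ∈ Icc 1 n, 0 ≤ (1 - U t) * A t := fun t ht => by
    obtain ⟨hA0, -, -, hU1⟩ := h.1 t (mem_Icc.1 ht).1 (mem_Icc.1 ht).2
    exact mul_nonneg (by linarith) hA0.le
  refine ⟨fun j hj hjn => ?_, fun j hj hjn => ?_, ?_⟩
  · have hne : (levelSet n c j).Nonempty := ⟨j, mem_levelSet_self (mem_Icc.2 ⟨hj, hjn⟩)⟩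
    have hb : ∀ t ∈ levelSet n c j, 0 < A t ∧ A t ≤ 1 ∧ 0 ≤ U t ∧ U t ≤ 1 :=
      fun _ => h.bounds_of_mem_levelSet
    exact ⟨(pooledA_pos_and_le_one hne hb).1, (pooledA_pos_and_le_one hne hb).2,
      expect_nonneg fun t ht => (hb t ht).2.2.1, expect_le hne fun t ht => (hb t ht).2.2.2⟩
  · rw [h.one_sub_ironedU_mul_ironedA (mem_Icc.2 ⟨by omega, hjn⟩),
      h.one_sub_ironedU_mul_ironedA (mem_Icc.2 ⟨hj, hjn.le⟩)]
    exact expect_levelSet_succ_le h.antitoneOn hj hjn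
  · calc ∑ j ∈ Icc 1 n, (1 - ironedU n c U j) * ironedA n c A U j * vc c j
        = ∑ j ∈ Icc 1 n, (𝔼 t ∈ levelSet n c j, (1 - U t) * A t) * vc c j :=
          sum_congr rfl fun j hj => by rw [h.one_sub_ironedU_mul_ironedA hj]
      _ ≤ ∑ j ∈ Icc 1 n, (1 - U j) * A j * vc c j :=
          sum_expect_levelSet_mul_vc_le h.antitoneOn hx0
      _ ≤ B := h.2.2

theorem FeasPair.objV_ironed_le (h : FeasPair n c B A U) :
    objV n c β (ironedA n c A U) (ironedU n c U) ≤ objV n c β A U := by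
  have hcost : ∑ j ∈ Icc 1 n, (1 - ironedU n c U j) / ironedA n c A U j ≤
      ∑ j ∈ Icc 1 n, (1 - U j) / A j :=
    calc _ ≤ ∑ j ∈ Icc 1 n, 𝔼 t ∈ levelSet n c j, (1 - U t) / A t :=
          sum_le_sum fun j hj => one_sub_expect_div_pooledA_le ⟨j, mem_levelSet_self hj⟩
            fun _ => h.bounds_of_mem_levelSet
      _ = _ := sum_expect_fiber _ (rvc n c) _
  have hU : ∑ j ∈ Icc 1 n, ironedU n c U j = ∑ j ∈ Icc 1 n, U j := sum_expect_fiber _ (rvc n c) _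
  unfold objV
  rw [hU]
  gcongr

end Ironing

theorem stmt16_general (n : ℕ) (c : ℕ → ℝ) (B : ℝ) (β : ℝ)
    (hex : ∃ A U, OptimalPair n c B β A U) :
    ∃ A U, OptimalPair n c B β A U ∧
      ∀ j k, 1 ≤ j → j ≤ n → 1 ≤ k → k ≤ n → rvc n c j = rvc n c k →
        U j = U k ∧ A j = A k := by
  obtain ⟨A, U, hfeas, hopt⟩ := hex
  refine ⟨ironedA n c A U, ironedU n c U,
    ⟨hfeas.ironed, fun A' U' h' => hfeas.objV_ironed_le.trans (hopt A' U' h')⟩, ?_⟩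
  intro j k _ _ _ _ hjk
  simp only [ironedA, ironedU, levelSet_congr hjk, and_self]

/-- if some optimal pair exists, there is an optimal pair which
is constant on level sets of the regularized virtual cost. -/
theorem stmt16 (n : ℕ) (hn : 1 ≤ n) (c : ℕ → ℝ) (hc0 : c 0 = 0) (hc1 : 0 < c 1)
    (hmono : ∀ a b, a ≤ b → b ≤ n → c a ≤ c b)
    (B : ℝ) (hB : 0 < B) (hBle : B ≤ ∑ j ∈ Finset.Icc 1 n, vc c j)
    (β : ℝ) (hβ : 0 < β)
    (hex : ∃ A U, OptimalPair n c B β A U) :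
    ∃ A U, OptimalPair n c B β A U ∧
      ∀ j k, 1 ≤ j → j ≤ n → 1 ≤ k → k ≤ n → rvc n c j = rvc n c k →
        U j = U k ∧ A j = A k :=
  stmt16_general n c B β hex
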